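/- arXiv:2512.23687 — 11 statements merged into one kernel-verified Lean document; each statement's English description precedes it below -/
import Mathlib

section
/- Let G be a simple graph on a finite vertex type with a bipartition (A, B), and let S be a set of vertices such that G ⊕ S is co-bipartite. If S ∩ A is nonempty, then |A \ S| ≤ 1. -/
open SimpleGraph

/-- Subgraph complementation: `G ⊕ S` toggles all adjacencies inside `S`. -/
def scomp {V : Type*} (G : SimpleGraph V) (S : Set V) : SimpleGraph V where
  Adj u v := u ≠ v ∧ (((u ∈ S ∧ v ∈ S) ∧ ¬ G.Adj u v) ∨ (¬(u ∈ S ∧ v ∈ S) ∧ G.Adj u v))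
  symm := by
    constructor
    intro u v h
    obtain ⟨hne, h⟩ := h
    refine ⟨hne.symm, ?_⟩
    rcases h with ⟨⟨hu, hv⟩, hnadj⟩ | ⟨hns, hadj⟩
    · exact Or.inl ⟨⟨hv, hu⟩, fun h => hnadj h.symm⟩
    · exact Or.inr ⟨fun h' => hns ⟨h'.2, h'.1⟩, hadj.symm⟩
  loopless := by constructor; intro u h; exact h.1 rfl

/-- `s` is an independent set of `G`. -/
def IsIndep {V : Type*} (G : SimpleGraph V) (s : Set V) : Prop :=
  ∀ ⦃u⦄, u ∈ s → ∀ ⦃v⦄, v ∈ s → ¬ G.Adj u v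

/-! Outside `S` nothing changes, so the independent set `A` stays independent in `G ⊕ S` except for
pairs inside `S ∩ A`. A graph covered by two cliques has no independent set of size three, but a
vertex of `S ∩ A` and two distinct vertices of `A \ S` would form one. -/

lemma not_scomp_adj_of_isIndep {V : Type*} {G : SimpleGraph V} {S s : Set V} (hs : IsIndep G s)
    {u v : V} (hu : u ∈ s) (hv : v ∈ s) (huv : ¬(u ∈ S ∧ v ∈ S)) : ¬(scomp G S).Adj u v := by
  rintro ⟨-, ⟨hS, -⟩ | ⟨-, hadj⟩⟩
  · exact huv hS
  · exact hs hu hv hadj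

lemma SimpleGraph.eq_of_pairwise_not_adj_of_isClique_cover {V : Type*} {H : SimpleGraph V}
    {K₁ K₂ : Set V} (hcover : K₁ ∪ K₂ = Set.univ) (h₁ : H.IsClique K₁) (h₂ : H.IsClique K₂)
    {a u v : V} (hau : ¬H.Adj a u) (hav : ¬H.Adj a v) (huv : ¬H.Adj u v)
    (hau' : a ≠ u) (hav' : a ≠ v) : u = v := by
  have mem : ∀ x, x ∈ K₁ ∨ x ∈ K₂ := Set.eq_univ_iff_forall.mp hcover
  by_contra hne
  rcases mem a with ha | ha
  · have hu := (mem u).resolve_left fun hu => hau (h₁ ha hu hau')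
    have hv := (mem v).resolve_left fun hv => hav (h₁ ha hv hav')
    exact huv (h₂ hu hv hne)
  · have hu := (mem u).resolve_right fun hu => hau (h₂ ha hu hau')
    have hv := (mem v).resolve_right fun hv => hav (h₂ ha hv hav')
    exact huv (h₁ hu hv hne)

theorem stmt1_general {V : Type*} (G : SimpleGraph V) (A : Set V)
    (hA : IsIndep G A)
    (S : Set V)
    (hco : ∃ K₁ K₂ : Set V, K₁ ∪ K₂ = Set.univ ∧
      (scomp G S).IsClique K₁ ∧ (scomp G S).IsClique K₂)
    (hSA : (S ∩ A).Nonempty) :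
    (A \ S).ncard ≤ 1 := by
  obtain ⟨a, haS, haA⟩ := hSA
  obtain ⟨K₁, K₂, hcover, h₁, h₂⟩ := hco
  have hsub : (A \ S).Subsingleton := fun u ⟨huA, huS⟩ v ⟨hvA, hvS⟩ =>
    eq_of_pairwise_not_adj_of_isClique_cover hcover h₁ h₂
      (not_scomp_adj_of_isIndep hA haA huA fun h => huS h.2)
      (not_scomp_adj_of_isIndep hA haA hvA fun h => hvS h.2)
      (not_scomp_adj_of_isIndep hA huA hvA fun h => huS h.1)
      (ne_of_mem_of_not_mem haS huS) (ne_of_mem_of_not_mem haS hvS)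
  exact (Set.ncard_le_one hsub.finite).mpr fun _ hx _ hy => hsub hx hy

theorem stmt1 {V : Type*} [Fintype V] (G : SimpleGraph V) (A B : Set V)
    (hpart : A ∪ B = Set.univ) (hdisj : Disjoint A B)
    (hA : IsIndep G A) (hB : IsIndep G B)
    (S : Set V)
    (hco : ∃ K₁ K₂ : Set V, K₁ ∪ K₂ = Set.univ ∧
      (scomp G S).IsClique K₁ ∧ (scomp G S).IsClique K₂)
    (hSA : (S ∩ A).Nonempty) :
    (A \ S).ncard ≤ 1 :=
  stmt1_general G A hA S hco hSA
end

section
/- Let G be a simple graph on a finite vertex type whose vertex set is partitioned into a clique K and an independent set I, and let S be a set of vertices such that G ⊕ S is bipartite. If S ∩ K is nonempty, then |K \ S| ≤ 1. -/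
open SimpleGraph

/-
A vertex `s ∈ S ∩ K` and two distinct vertices `a, b ∈ K \ S` are pairwise adjacent in `G`,
and no pair of them lies inside `S`, so they stay pairwise adjacent in `G ⊕ S`. A triangle
cannot be covered by two independent sets, contradicting bipartiteness of `G ⊕ S`.
-/

theorem scomp_adj_of_adj {V : Type*} {G : SimpleGraph V} {S : Set V} {u v : V}
    (h : G.Adj u v) (hS : ¬(u ∈ S ∧ v ∈ S)) : (scomp G S).Adj u v :=
  ⟨h.ne, Or.inr ⟨hS, h⟩⟩

theorem IsIndep.not_triangle_of_union {V : Type*} {H : SimpleGraph V} {X Y : Set V}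
    (hX : IsIndep H X) (hY : IsIndep H Y) {a b c : V}
    (ha : a ∈ X ∪ Y) (hb : b ∈ X ∪ Y) (hc : c ∈ X ∪ Y)
    (hab : H.Adj a b) (hbc : H.Adj b c) (hac : H.Adj a c) : False := by
  rcases ha with ha | ha <;> rcases hb with hb | hb <;> rcases hc with hc | hc
  all_goals first
    | exact hX ha hb hab | exact hY ha hb hab
    | exact hX hb hc hbc | exact hY hb hc hbc
    | exact hX ha hc hac | exact hY ha hc hac

theorem stmt3_general {V : Type*} (G : SimpleGraph V) (K : Set V)
    (hK : G.IsClique K)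
    (S : Set V)
    (hbip : ∃ X Y : Set V, X ∪ Y = Set.univ ∧ Disjoint X Y ∧
      IsIndep (scomp G S) X ∧ IsIndep (scomp G S) Y)
    (hSK : (S ∩ K).Nonempty) :
    (K \ S).ncard ≤ 1 := by
  obtain ⟨X, Y, hXY, -, hX, hY⟩ := hbip
  obtain ⟨s, hsS, hsK⟩ := hSK
  have hcover : ∀ v, v ∈ X ∪ Y := fun v => hXY ▸ Set.mem_univ v
  have hsub : (K \ S).Subsingleton := by
    rintro a ⟨haK, haS⟩ b ⟨hbK, hbS⟩
    by_contra hab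
    have hne : ∀ {v}, v ∉ S → s ≠ v := fun hv h => hv (h ▸ hsS)
    exact hX.not_triangle_of_union hY (hcover s) (hcover a) (hcover b)
      (scomp_adj_of_adj (hK hsK haK (hne haS)) fun h => haS h.2)
      (scomp_adj_of_adj (hK haK hbK hab) fun h => haS h.1)
      (scomp_adj_of_adj (hK hsK hbK (hne hbS)) fun h => hbS h.2)
  exact (Set.ncard_le_one_iff hsub.finite).2 fun ha hb => hsub ha hb

theorem stmt3 {V : Type*} [Fintype V] (G : SimpleGraph V) (K I : Set V)
    (hpart : K ∪ I = Set.univ) (hdisj : Disjoint K I)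
    (hK : G.IsClique K) (hI : IsIndep G I)
    (S : Set V)
    (hbip : ∃ X Y : Set V, X ∪ Y = Set.univ ∧ Disjoint X Y ∧
      IsIndep (scomp G S) X ∧ IsIndep (scomp G S) Y)
    (hSK : (S ∩ K).Nonempty) :
    (K \ S).ncard ≤ 1 :=
  stmt3_general G K hK S hbip hSK
end

section
/- Let G be a simple graph on a finite vertex type whose vertex set is partitioned into a clique K and an independent set I, and let S be a set of vertices such that G ⊕ S is bipartite. Then |S ∩ I| ≤ 2. -/
open SimpleGraph

theorem isClique_scomp_inter_of_isIndep {V : Type*} {G : SimpleGraph V} {S I : Set V}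
    (hI : IsIndep G I) : (scomp G S).IsClique (S ∩ I) :=
  fun _ hu _ hv huv => ⟨huv, Or.inl ⟨⟨hu.1, hv.1⟩, hI hu.2 hv.2⟩⟩

/-- Recording which side of the bipartition a vertex lies on is injective on a clique. -/
theorem SimpleGraph.IsClique.ncard_le_two_of_isIndep_cover {V : Type*} {G : SimpleGraph V}
    {s X Y : Set V} (hs : G.IsClique s) (hXY : X ∪ Y = Set.univ) (hX : IsIndep G X)
    (hY : IsIndep G Y) : s.ncard ≤ 2 := by
  have hmemY : ∀ w, w ∉ X → w ∈ Y := fun w hw =>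
    (hXY ▸ Set.mem_univ w : w ∈ X ∪ Y).resolve_left hw
  have hside : Set.InjOn (fun v => v ∈ X) s := by
    intro u hu v hv (h : (u ∈ X) = (v ∈ X))
    by_contra huv
    by_cases huX : u ∈ X
    · exact hX huX (h ▸ huX) (hs hu hv huv)
    · exact hY (hmemY u huX) (hmemY v (h ▸ huX)) (hs hu hv huv)
  calc s.ncard ≤ (Set.univ : Set Prop).ncard :=
        Set.ncard_le_ncard_of_injOn _ (fun _ _ => Set.mem_univ _) hside
    _ = 2 := by simp

theorem stmt4_general {V : Type*} (G : SimpleGraph V) (I : Set V)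
    (hI : IsIndep G I)
    (S : Set V)
    (hbip : ∃ X Y : Set V, X ∪ Y = Set.univ ∧ Disjoint X Y ∧
      IsIndep (scomp G S) X ∧ IsIndep (scomp G S) Y) :
    (S ∩ I).ncard ≤ 2 := by
  obtain ⟨X, Y, hXY, -, hX, hY⟩ := hbip
  exact (isClique_scomp_inter_of_isIndep (S := S) hI).ncard_le_two_of_isIndep_cover hXY hX hY

theorem stmt4 {V : Type*} [Fintype V] (G : SimpleGraph V) (K I : Set V)
    (hpart : K ∪ I = Set.univ) (hdisj : Disjoint K I)
    (hK : G.IsClique K) (hI : IsIndep G I)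
    (S : Set V)
    (hbip : ∃ X Y : Set V, X ∪ Y = Set.univ ∧ Disjoint X Y ∧
      IsIndep (scomp G S) X ∧ IsIndep (scomp G S) Y) :
    (S ∩ I).ncard ≤ 2 :=
  stmt4_general G I hI S hbip
end

section
/- Let G be a simple graph on a finite vertex type with a bipartition (A, B). Let Q be a clique of G with |Q| ≤ 2, and let X and Y be sets partitioning V \ Q such that X and Y are both independent sets in G. If every vertex of G adjacent to a vertex of Q lies in X, then G ⊕ (X ∪ Q) is a split graph: in G ⊕ (X ∪ Q), the set X is a clique and the set V \ X is an independent set. -/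
open SimpleGraph

/-! Complementing `X ∪ Q` turns the independent set `X` into a clique and the clique `Q` into an
independent set, and leaves every pair with an endpoint outside `X ∪ Q` untouched. Outside `X`, the
only remaining edges of `G` would join `Q` to a vertex outside `X`, or two vertices of `Y`. -/

section scomp

variable {V : Type*} {G : SimpleGraph V} {S : Set V} {u v : V}

theorem scomp_adj_of_mem (hu : u ∈ S) (hv : v ∈ S) :
    (scomp G S).Adj u v ↔ u ≠ v ∧ ¬ G.Adj u v := by
  simp [scomp, hu, hv]

theorem scomp_adj_of_notMem_left (hu : u ∉ S) : (scomp G S).Adj u v ↔ G.Adj u v := by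
  simp only [scomp, hu, false_and, not_false_eq_true, true_and, false_or, and_iff_right_iff_imp]
  exact G.ne_of_adj

theorem scomp_adj_of_notMem_right (hv : v ∉ S) : (scomp G S).Adj u v ↔ G.Adj u v := by
  rw [(scomp G S).adj_comm, G.adj_comm, scomp_adj_of_notMem_left hv]

theorem isClique_scomp_of_isIndep {X : Set V} (hXS : X ⊆ S) (hX : IsIndep G X) :
    (scomp G S).IsClique X :=
  fun _ hu _ hv hne => (scomp_adj_of_mem (hXS hu) (hXS hv)).2 ⟨hne, hX hu hv⟩

theorem isIndep_scomp_of_isClique {Q : Set V} (hQS : Q ⊆ S) (hQ : G.IsClique Q) :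
    IsIndep (scomp G S) Q :=
  fun _ hu _ hv hadj =>
    let ⟨hne, hnadj⟩ := (scomp_adj_of_mem (hQS hu) (hQS hv)).1 hadj
    hnadj (hQ hu hv hne)

end scomp

theorem stmt6_general {V : Type*} (G : SimpleGraph V)
    (Q X Y : Set V)
    (hQ : G.IsClique Q)
    (hXY : X ∪ Y = Set.univ \ Q)
    (hX : IsIndep G X) (hY : IsIndep G Y)
    (hN : ∀ q ∈ Q, ∀ v : V, G.Adj q v → v ∈ X) :
    (scomp G (X ∪ Q)).IsClique X ∧ IsIndep (scomp G (X ∪ Q)) (Set.univ \ X) := by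
  have mem_Y : ∀ w, w ∉ X → w ∉ Q → w ∈ Y := fun w hwX hwQ =>
    (hXY ▸ ⟨trivial, hwQ⟩ : w ∈ X ∪ Y).resolve_left hwX
  refine ⟨isClique_scomp_of_isIndep Set.subset_union_left hX, ?_⟩
  rintro u ⟨-, huX⟩ v ⟨-, hvX⟩ hadj
  by_cases huQ : u ∈ Q
  · by_cases hvQ : v ∈ Q
    · exact isIndep_scomp_of_isClique Set.subset_union_right hQ huQ hvQ hadj
    · have hvS : v ∉ X ∪ Q := not_or.2 ⟨hvX, hvQ⟩
      exact hvX (hN u huQ v ((scomp_adj_of_notMem_right hvS).1 hadj))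
  · have huS : u ∉ X ∪ Q := not_or.2 ⟨huX, huQ⟩
    have hG := (scomp_adj_of_notMem_left huS).1 hadj
    by_cases hvQ : v ∈ Q
    · exact huX (hN v hvQ u hG.symm)
    · exact hY (mem_Y u huX huQ) (mem_Y v hvX hvQ) hG

theorem stmt6 {V : Type*} [Fintype V] (G : SimpleGraph V) (A B : Set V)
    (hpart : A ∪ B = Set.univ) (hdisj : Disjoint A B)
    (hA : IsIndep G A) (hB : IsIndep G B)
    (Q X Y : Set V)
    (hQ : G.IsClique Q) (hQcard : Q.ncard ≤ 2)
    (hXY : X ∪ Y = Set.univ \ Q) (hXYdisj : Disjoint X Y)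
    (hX : IsIndep G X) (hY : IsIndep G Y)
    (hN : ∀ q ∈ Q, ∀ v : V, G.Adj q v → v ∈ X) :
    (scomp G (X ∪ Q)).IsClique X ∧ IsIndep (scomp G (X ∪ Q)) (Set.univ \ X) :=
  stmt6_general G Q X Y hQ hXY hX hY hN
end

section
/- Let G be a 2-connected bipartite simple graph on a finite vertex type with bipartition (A, B), and let S be a set of vertices such that the subgraph of G induced on S is not a complete bipartite graph. Then G ⊕ S is chordal if and only if both of the following hold: (i) S is a vertex cover of G, and (ii) the subgraph of G induced on S contains no induced 2K₂. -/
open SimpleGraph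

/-- A cycle `C` has a chord in `G`. -/
def HasChord {V : Type*} (G : SimpleGraph V) {a : V} (C : G.Walk a a) : Prop :=
  ∃ x y : V, x ∈ C.support ∧ y ∈ C.support ∧ G.Adj x y ∧ s(x, y) ∉ C.edges

/-- `G` is chordal: every cycle of length at least 4 has a chord. -/
def Chordal {V : Type*} (G : SimpleGraph V) : Prop :=
  ∀ (a : V) (C : G.Walk a a), C.IsCycle → 4 ≤ C.length → HasChord G C

/-!
Write `H = G ⊕ S`. If `G` has an edge `uv` with `u, v ∉ S`, then `u` and `v` have no common
`H`-neighbour (`G` is bipartite), so in a chordal `H` the edge `uv` is a bridge: a shortest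
`u`–`v` path avoiding `uv` would close a chordless cycle of length at least 4. But if some
`x ∈ A ∩ S` and `y ∈ B ∩ S` are not adjacent in `G`, then `xy` is an edge of `H` joining all of
`S` in `H - uv`, and 2-connectivity of `G` lets `u` and `v` reach `S` while avoiding each other;
hence `S` induces a complete bipartite graph. An induced `2K₂` `ab, cd` inside `S` becomes the
chordless 4-cycle `a c b d` of `H`.

Conversely, let `C` be a chordless cycle of `H` of length at least 4. A vertex of `C` outside `S`
has its two cycle neighbours in `S` on the same side, so they are adjacent in `H`: a chord.
If `C` lies in `S`, each side of `S` is a clique of `H` and so meets `C` in at most two vertices;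
thus `C` is an induced 4-cycle of `H`, whose complement is an induced `2K₂` of `G`.
-/

section Chords

variable {V : Type*} {G : SimpleGraph V} {a b c d : V}

lemma not_hasChord_iff {u : V} {C : G.Walk u u} :
    ¬HasChord G C ↔ ∀ x ∈ C.support, ∀ y ∈ C.support, G.Adj x y → s(x, y) ∈ C.edges := by
  simp [HasChord]

lemma hasChord_cycle4_iff (hab : G.Adj a b) (hbc : G.Adj b c) (hcd : G.Adj c d)
    (hda : G.Adj d a) :
    HasChord G (.cons hab (.cons hbc (.cons hcd (.cons hda .nil)))) ↔ G.Adj a c ∨ G.Adj b d := by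
  constructor
  · rintro ⟨x, y, hx, hy, hxy, hne⟩
    simp only [Walk.support_cons, Walk.support_nil, List.mem_cons, List.not_mem_nil,
      or_false] at hx hy
    simp only [Walk.edges_cons, Walk.edges_nil, List.mem_cons, List.not_mem_nil, or_false,
      not_or] at hne
    rcases hx with rfl | rfl | rfl | rfl | rfl <;> rcases hy with rfl | rfl | rfl | rfl | rfl <;>
      simp_all [Sym2.eq_swap, adj_comm]
  · rintro (h | h)
    · refine ⟨a, c, by simp, by simp, h, ?_⟩
      simp [hab.ne, hcd.ne, hbc.ne.symm, hda.ne.symm]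
    · refine ⟨b, d, by simp, by simp, h, ?_⟩
      simp [hbc.ne, hda.ne, hab.ne.symm, hcd.ne.symm]

end Chords

namespace SimpleGraph.Walk

variable {V : Type*} {G : SimpleGraph V}

lemma mem_edges_of_length_eq_dist {u v x y : V} (p : G.Walk u v) (hp : p.length = G.dist u v)
    (hx : x ∈ p.support) (hy : y ∈ p.support) (hxy : G.Adj x y) : s(x, y) ∈ p.edges := by
  have dist_getVert : ∀ i ≤ p.length, G.dist u (p.getVert i) = i := fun i hi => by
    rw [← length_eq_dist_of_subwalk hp (p.isSubwalk_take i), take_length]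
    omega
  obtain ⟨i, rfl, hi⟩ := mem_support_iff_exists_getVert.mp hx
  obtain ⟨j, rfl, hj⟩ := mem_support_iff_exists_getVert.mp hy
  have hij : i ≠ j := fun h => hxy.ne (h ▸ rfl)
  have hdist := hxy.diff_dist_adj (u := u)
  rw [dist_getVert i hi, dist_getVert j hj] at hdist
  rw [mk_mem_edges_iff_exists]
  rcases hdist with h | rfl | h
  · exact absurd h.symm hij
  · exact ⟨i, by omega, rfl⟩
  · exact ⟨j, by omega, by rw [show j + 1 = i by omega, Sym2.eq_swap]⟩

variable {u : V} {C : G.Walk u u}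

lemma IsCycle.eq_snd_or_eq_penultimate (hC : C.IsCycle) {z : V} (h : s(u, z) ∈ C.edges) :
    z = C.snd ∨ z = C.penultimate := by
  obtain ⟨i, hi, he⟩ := C.mk_mem_edges_iff_exists.mp h
  rcases Sym2.eq_iff.mp he with ⟨hu, rfl⟩ | ⟨rfl, hu⟩
  · have : i = 0 := by grind [hC.getVert_endpoint_iff hi.le]
    exact Or.inl (by rw [this])
  · have : i + 1 = C.length := by grind [hC.getVert_endpoint_iff (Nat.succ_le_of_lt hi)]
    exact Or.inr (by rw [penultimate, ← this, Nat.add_sub_cancel])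

lemma IsCycle.snd_penultimate_notMem_edges (hC : C.IsCycle) (h4 : 4 ≤ C.length) :
    s(C.snd, C.penultimate) ∉ C.edges := by
  intro h
  obtain ⟨i, hi, he⟩ := C.mk_mem_edges_iff_exists.mp h
  have inj := hC.getVert_injOn
  have hsnd : C.snd ≠ u := (C.adj_snd hC.not_nil).ne.symm
  have hpen : C.penultimate ≠ u := (C.adj_penultimate hC.not_nil).ne
  simp only [penultimate, snd] at he hsnd hpen
  rcases Sym2.eq_iff.mp he with ⟨h1, h2⟩ | ⟨h1, h2⟩
  · have hi0 : i ≠ 0 := by rintro rfl; exact hsnd (h1.symm.trans C.getVert_zero)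
    have := inj (by simp; omega) (by simp; omega) h1
    have := inj (by simp; omega) (by simp; omega) h2
    omega
  · obtain rfl : i = 0 := by have := inj (by simp; omega) (by simp; omega) h2; omega
    exact hpen (h1.symm.trans C.getVert_zero)

lemma IsCycle.exists_neighbors [DecidableEq V] {w : V} (hC : C.IsCycle)
    (h4 : 4 ≤ C.length) (hw : w ∈ C.support) :
    ∃ b c, b ≠ c ∧ s(w, b) ∈ C.edges ∧ s(w, c) ∈ C.edges ∧ s(b, c) ∉ C.edges ∧
      ∀ z, s(w, z) ∈ C.edges → z = b ∨ z = c := by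
  set C' := C.rotate w hw
  have hC' : C'.IsCycle := hC.rotate hw
  have h4' : 4 ≤ C'.length := by simpa [C'] using h4
  have hedges : ∀ e, e ∈ C'.edges ↔ e ∈ C.edges := fun e => (C.rotate_edges w hw).mem_iff
  refine ⟨C'.snd, C'.penultimate, hC'.snd_ne_penultimate, ?_, ?_, ?_, ?_⟩
  · exact (hedges _).mp (C'.mk_mem_edges_iff_exists.mpr ⟨0, by omega, by simp⟩)
  · refine (hedges _).mp (C'.mk_mem_edges_iff_exists.mpr ⟨C'.length - 1, by omega, ?_⟩)
    rw [Nat.sub_add_cancel (by omega), C'.getVert_length, Sym2.eq_swap]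
  · rw [← hedges]
    exact hC'.snd_penultimate_notMem_edges h4'
  · exact fun z hz => hC'.eq_snd_or_eq_penultimate ((hedges _).mpr hz)

lemma IsCycle.card_le_two_of_isClique (hC : C.IsCycle)
    (h4 : 4 ≤ C.length) (hnc : ¬HasChord G C) {s : Finset V} (hs : ∀ x ∈ s, x ∈ C.support)
    (hcl : G.IsClique s) : s.card ≤ 2 := by
  classical
  rw [not_hasChord_iff] at hnc
  by_contra! h
  obtain ⟨p, hp, q, hq, r, hr, hpq, hpr, hqr⟩ := Finset.two_lt_card.mp h
  have edge : ∀ x ∈ s, ∀ y ∈ s, x ≠ y → s(x, y) ∈ C.edges := fun x hx y hy hxy =>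
    hnc x (hs x hx) y (hs y hy) (hcl hx hy hxy)
  obtain ⟨b, c, -, -, -, hbc, hnbr⟩ := hC.exists_neighbors h4 (hs p hp)
  have hqr' := edge q hq r hr hqr
  rcases hnbr q (edge p hp q hq hpq) with rfl | rfl <;>
    rcases hnbr r (edge p hp r hr hpr) with rfl | rfl
  · exact hqr rfl
  · exact hbc hqr'
  · exact hbc (Sym2.eq_swap ▸ hqr')
  · exact hqr rfl

lemma IsCycle.length_le_four_of_isClique (hC : C.IsCycle)
    (h4 : 4 ≤ C.length) (hnc : ¬HasChord G C) {P Q : Set V} (hP : G.IsClique P)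
    (hQ : G.IsClique Q) (hcover : ∀ x ∈ C.support, x ∈ P ∨ x ∈ Q) : C.length ≤ 4 := by
  classical
  set T := C.support.tail.toFinset
  have hT : T.card = C.length := by
    rw [List.toFinset_card_of_nodup hC.support_nodup, List.length_tail, C.length_support]
    omega
  have hmem : ∀ x ∈ T, x ∈ C.support := fun x hx =>
    List.mem_of_mem_tail (List.mem_toFinset.mp hx)
  have hPQ : T ⊆ T.filter (· ∈ P) ∪ T.filter (· ∈ Q) := fun x hx => by
    rcases hcover x (hmem x hx) with h | h <;> simp [hx, h]
  have bound : ∀ R : Set V, G.IsClique R → (T.filter (· ∈ R)).card ≤ 2 := fun R hR =>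
    hC.card_le_two_of_isClique h4 hnc (fun x hx => hmem x (Finset.mem_filter.mp hx).1)
      (hR.subset fun x hx => (Finset.mem_filter.mp hx).2)
  have := (Finset.card_le_card hPQ).trans (Finset.card_union_le _ _)
  have := bound P hP
  have := bound Q hQ
  omega

lemma IsCycle.exists_cycle4 (hC : C.IsCycle) (hlen : C.length = 4) (hnc : ¬HasChord G C) :
    ∃ a b c d, a ∈ C.support ∧ b ∈ C.support ∧ c ∈ C.support ∧ d ∈ C.support ∧
      a ≠ c ∧ b ≠ d ∧ G.Adj a b ∧ G.Adj b c ∧ G.Adj c d ∧ G.Adj d a ∧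
      ¬G.Adj a c ∧ ¬G.Adj b d := by
  rcases C with _ | ⟨hab, _ | ⟨hbc, _ | ⟨hcd, _ | ⟨hda, _ | ⟨_, _⟩⟩⟩⟩⟩ <;> simp at hlen
  have hnodup := hC.support_nodup
  simp only [Walk.support_cons, Walk.support_nil, List.tail_cons, List.nodup_cons, List.mem_cons,
    List.not_mem_nil, or_false] at hnodup
  rw [hasChord_cycle4_iff, not_or] at hnc
  exact ⟨_, _, _, _, by simp, by simp, by simp, by simp, fun h => hda.ne (by tauto),
    by tauto, hab, hbc, hcd, hda, hnc⟩

end SimpleGraph.Walk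

section Chordal

variable {V : Type*} {G : SimpleGraph V} {a b c d u v : V}

lemma Chordal.adj_or_adj_of_cycle4 (hG : Chordal G) (hab : G.Adj a b) (hbc : G.Adj b c)
    (hcd : G.Adj c d) (hda : G.Adj d a) (hac : a ≠ c) (hbd : b ≠ d) :
    G.Adj a c ∨ G.Adj b d := by
  refine (hasChord_cycle4_iff hab hbc hcd hda).mp (hG a _ ?_ (by simp))
  rw [Walk.cons_isCycle_iff, Walk.isPath_def]
  simp [hab.ne, hbc.ne, hcd.ne, hda.ne, hac, hbd, hab.ne.symm, hda.ne.symm, hac.symm]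

lemma Chordal.isBridge_of_forall_not_adj (hG : Chordal G) (huv : G.Adj u v)
    (hcommon : ∀ w, G.Adj u w → ¬G.Adj v w) : G.IsBridge s(u, v) := by
  set K := G.deleteEdges {s(u, v)}
  have hle : K ≤ G := G.deleteEdges_le _
  have adj' : ∀ {x y}, G.Adj x y → s(x, y) ≠ s(u, v) → K.Adj x y := fun h hne =>
    deleteEdges_adj.mpr ⟨h, hne⟩
  rw [isBridge_iff]
  intro hreach
  obtain ⟨P, hP, hPdist⟩ := hreach.symm.exists_path_of_dist
  have huv_notMem : s(u, v) ∉ P.edges := fun h => by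
    simpa [K] using P.edges_subset_edgeSet h
  have hlen : 3 ≤ P.length := by
    have h2 : 2 < K.edist v u := by
      refine two_lt_edist_iff.mpr ⟨huv.ne.symm, fun h => ?_, ?_⟩
      · simp [K, Sym2.eq_swap] at h
      · ext w
        simp only [mem_commonNeighbors, Set.mem_empty_iff_false, iff_false, not_and]
        exact fun hvw hwu => hcommon w (hle hwu) (hle hvw)
    rw [← hreach.symm.coe_dist_eq_edist] at h2
    rw [hPdist]
    exact_mod_cast h2
  set C := Walk.cons huv (P.mapLe hle)
  have hC : C.IsCycle := by
    rw [Walk.cons_isCycle_iff, Walk.edges_mapLe_eq_edges]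
    exact ⟨hP.mapLe hle, huv_notMem⟩
  obtain ⟨x, y, hx, hy, hxy, hne⟩ := hG u C hC (by simp [C]; omega)
  simp only [C, Walk.support_cons, Walk.edges_cons, Walk.support_mapLe_eq_support,
    Walk.edges_mapLe_eq_edges, List.mem_cons, not_or] at hx hy hne
  have hsupp : ∀ {z}, z = u ∨ z ∈ P.support → z ∈ P.support := by
    rintro z (rfl | h)
    exacts [P.end_mem_support, h]
  exact hne.2 (P.mem_edges_of_length_eq_dist hPdist (hsupp hx) (hsupp hy) (adj' hxy hne.1))

end Chordal

section Scomp

variable {V : Type*} {G : SimpleGraph V} {S A : Set V} {a b c v : V}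

lemma scomp_adj_iff_of_mem (ha : a ∈ S) (hb : b ∈ S) :
    (scomp G S).Adj a b ↔ a ≠ b ∧ ¬G.Adj a b := by
  simp [scomp, ha, hb]

lemma scomp_adj_iff_of_left_notMem (ha : a ∉ S) : (scomp G S).Adj a b ↔ G.Adj a b := by
  simp only [scomp, ha, false_and, false_or, not_false_eq_true, true_and]
  exact ⟨And.right, fun h => ⟨h.ne, h⟩⟩

lemma IsIndep.isClique_scomp_inter (hA : IsIndep G A) : (scomp G S).IsClique (A ∩ S) :=
  fun _ ha _ hb hne => (scomp_adj_iff_of_mem ha.2 hb.2).mpr ⟨hne, hA ha.1 hb.1⟩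

lemma IsIndep.not_adj_of_adj_of_adj (hA : IsIndep G A) (hAc : IsIndep G Aᶜ) (hab : G.Adj a b)
    (hac : G.Adj a c) : ¬G.Adj b c := by
  have side : ∀ {x y}, G.Adj x y → (x ∈ A ↔ y ∉ A) := fun hxy =>
    ⟨fun hx hy => hA hx hy hxy, fun hy => by_contra fun hx => hAc hx hy hxy⟩
  intro hbc
  have := side hab
  have := side hac
  have := side hbc
  tauto

lemma exists_walk_notMem_support (h : (G.induce {w | w ≠ v}).Connected) (ha : a ≠ v)
    (hb : b ≠ v) : ∃ p : G.Walk a b, v ∉ p.support := by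
  obtain ⟨q⟩ := h.preconnected ⟨a, ha⟩ ⟨b, hb⟩
  refine ⟨q.map (Embedding.induce _).toHom, fun h => ?_⟩
  obtain ⟨w, -, hw⟩ := List.mem_map.mp (q.support_map (Embedding.induce _).toHom ▸ h)
  exact w.2 hw

lemma exists_mem_reachable_deleteEdges_scomp (p : G.Walk a b) (hb : b ∈ S) {e : Sym2 V}
    (hve : v ∈ e) (hv : v ∉ p.support) :
    ∃ s ∈ S, ((scomp G S).deleteEdges {e}).Reachable a s := by
  induction p with
  | nil => exact ⟨_, hb, .rfl⟩
  | @cons a c _ hac p ih =>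
    by_cases ha : a ∈ S
    · exact ⟨a, ha, .rfl⟩
    simp only [Walk.support_cons, List.mem_cons, not_or] at hv
    obtain ⟨s, hs, hreach⟩ := ih hb hv.2
    have hne : s(a, c) ≠ e := by
      rintro rfl
      rcases Sym2.mem_iff.mp hve with rfl | rfl
      exacts [hv.1 rfl, hv.2 p.start_mem_support]
    exact ⟨s, hs, (deleteEdges_adj.mpr
      ⟨(scomp_adj_iff_of_left_notMem ha).mpr hac, hne⟩).reachable.trans hreach⟩

end Scomp

section Main

variable {V : Type*} {G : SimpleGraph V} {S A : Set V} {u v x y : V}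

def HasInduced2K2 (G : SimpleGraph V) (S : Set V) : Prop :=
  ∃ a b c d : V, a ∈ S ∧ b ∈ S ∧ c ∈ S ∧ d ∈ S ∧
    a ≠ b ∧ a ≠ c ∧ a ≠ d ∧ b ≠ c ∧ b ≠ d ∧ c ≠ d ∧
    G.Adj a b ∧ G.Adj c d ∧
    ¬ G.Adj a c ∧ ¬ G.Adj a d ∧ ¬ G.Adj b c ∧ ¬ G.Adj b d

lemma reachable_deleteEdges_scomp (h2conn : ∀ w : V, (G.induce {z : V | z ≠ w}).Connected)
    (hA : IsIndep G A) (hAc : IsIndep G Aᶜ) (huv : G.Adj u v) (hu : u ∉ S) (hv : v ∉ S)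
    (hx : x ∈ A ∩ S) (hy : y ∈ Aᶜ ∩ S) (hxy : ¬G.Adj x y) :
    ((scomp G S).deleteEdges {s(u, v)}).Reachable u v := by
  set H' := (scomp G S).deleteEdges {s(u, v)}
  have adj' : ∀ {a b}, a ∈ S → b ∈ S → a ≠ b → ¬G.Adj a b → H'.Adj a b := fun ha hb hab h =>
    deleteEdges_adj.mpr ⟨(scomp_adj_iff_of_mem ha hb).mpr ⟨hab, h⟩, fun he => by
      rcases Sym2.mem_iff.mp (he ▸ Sym2.mem_mk_left _ _ : _ ∈ s(u, v)) with rfl | rfl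
      exacts [hu ha, hv ha]⟩
  have reach_of_indep : ∀ {P : Set V}, IsIndep G P → ∀ {a b}, a ∈ P ∩ S → b ∈ P ∩ S →
      H'.Reachable a b := fun hP a b ha hb => by
    rcases eq_or_ne a b with rfl | hab
    · rfl
    · exact (adj' ha.2 hb.2 hab (hP ha.1 hb.1)).reachable
  have hxy' : H'.Adj x y := adj' hx.2 hy.2 (fun h => hy.1 (h ▸ hx.1)) hxy
  have reach_x : ∀ s ∈ S, H'.Reachable x s := fun s hs => by
    by_cases hsA : s ∈ A
    · exact reach_of_indep hA hx ⟨hsA, hs⟩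
    · exact hxy'.reachable.trans (reach_of_indep hAc hy ⟨hsA, hs⟩)
  obtain ⟨p, hp⟩ := exists_walk_notMem_support (h2conn v) huv.ne (fun h => hv (h ▸ hx.2))
  obtain ⟨s, hs, hus⟩ :=
    exists_mem_reachable_deleteEdges_scomp p hx.2 (Sym2.mem_mk_right u v) hp
  obtain ⟨q, hq⟩ := exists_walk_notMem_support (h2conn u) huv.ne.symm (fun h => hu (h ▸ hx.2))
  obtain ⟨t, ht, hvt⟩ :=
    exists_mem_reachable_deleteEdges_scomp q hx.2 (Sym2.mem_mk_left u v) hq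
  exact hus.trans ((reach_x s hs).symm.trans ((reach_x t ht).trans hvt.symm))

theorem Chordal.adj_of_scomp (hch : Chordal (scomp G S))
    (h2conn : ∀ w : V, (G.induce {z : V | z ≠ w}).Connected) (hA : IsIndep G A)
    (hAc : IsIndep G Aᶜ) (huv : G.Adj u v) (hu : u ∉ S) (hv : v ∉ S)
    (hx : x ∈ A ∩ S) (hy : y ∈ Aᶜ ∩ S) : G.Adj x y := by
  by_contra hxy
  refine isBridge_iff.mp (hch.isBridge_of_forall_not_adj ?_ fun w huw hvw => ?_)
    (reachable_deleteEdges_scomp h2conn hA hAc huv hu hv hx hy hxy)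
  · exact (scomp_adj_iff_of_left_notMem hu).mpr huv
  · rw [scomp_adj_iff_of_left_notMem hu] at huw
    rw [scomp_adj_iff_of_left_notMem hv] at hvw
    exact hA.not_adj_of_adj_of_adj hAc huw.symm hvw.symm huv

theorem Chordal.scomp_vertexCover (hch : Chordal (scomp G S))
    (h2conn : ∀ w : V, (G.induce {z : V | z ≠ w}).Connected) (hA : IsIndep G A)
    (hAc : IsIndep G Aᶜ)
    (hnotcb : ¬ ∃ X Y : Set V, X ∪ Y = S ∧ Disjoint X Y ∧
      IsIndep G X ∧ IsIndep G Y ∧ ∀ x ∈ X, ∀ y ∈ Y, G.Adj x y) :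
    ∀ u v : V, G.Adj u v → u ∈ S ∨ v ∈ S := by
  intro u v huv
  by_contra! h
  refine hnotcb ⟨A ∩ S, Aᶜ ∩ S, ?_, ?_, fun a ha b hb => hA ha.1 hb.1,
    fun a ha b hb => hAc ha.1 hb.1,
    fun x hx y hy => hch.adj_of_scomp h2conn hA hAc huv h.1 h.2 hx hy⟩
  · rw [← Set.union_inter_distrib_right, Set.union_compl_self, Set.univ_inter]
  · exact (disjoint_compl_right).mono Set.inter_subset_left Set.inter_subset_left

theorem Chordal.not_hasInduced2K2 (hch : Chordal (scomp G S)) : ¬HasInduced2K2 G S := by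
  rintro ⟨a, b, c, d, ha, hb, hc, hd, hab, hac, had, hbc, hbd, hcd, gab, gcd, nac, nad, nbc, nbd⟩
  have adj : ∀ {x y}, x ∈ S → y ∈ S → x ≠ y → ¬G.Adj x y → (scomp G S).Adj x y :=
    fun hx hy hne h => (scomp_adj_iff_of_mem hx hy).mpr ⟨hne, h⟩
  rcases hch.adj_or_adj_of_cycle4 (adj ha hc hac nac) (adj hc hb hbc.symm fun h => nbc h.symm)
    (adj hb hd hbd nbd) (adj hd ha had.symm fun h => nad h.symm) hab hcd with h | h
  · exact ((scomp_adj_iff_of_mem ha hb).mp h).2 gab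
  · exact ((scomp_adj_iff_of_mem hc hd).mp h).2 gcd

lemma hasChord_scomp_of_notMem [DecidableEq V] {a w : V} {C : (scomp G S).Walk a a}
    (hA : IsIndep G A) (hAc : IsIndep G Aᶜ) (hvc : ∀ u v : V, G.Adj u v → u ∈ S ∨ v ∈ S)
    (hC : C.IsCycle) (h4 : 4 ≤ C.length) (hw : w ∈ C.support) (hwS : w ∉ S) :
    HasChord (scomp G S) C := by
  obtain ⟨b, c, hbc, hb, hc, hbc_notMem, -⟩ := hC.exists_neighbors h4 hw
  have gb := (scomp_adj_iff_of_left_notMem hwS).mp (C.adj_of_mem_edges hb)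
  have gc := (scomp_adj_iff_of_left_notMem hwS).mp (C.adj_of_mem_edges hc)
  refine ⟨b, c, C.snd_mem_support_of_mem_edges hb, C.snd_mem_support_of_mem_edges hc, ?_,
    hbc_notMem⟩
  exact (scomp_adj_iff_of_mem ((hvc w b gb).resolve_left hwS) ((hvc w c gc).resolve_left hwS)).mpr
    ⟨hbc, hA.not_adj_of_adj_of_adj hAc gb gc⟩

lemma hasInduced2K2_of_not_hasChord_scomp {a : V} {C : (scomp G S).Walk a a}
    (hA : IsIndep G A) (hAc : IsIndep G Aᶜ) (hC : C.IsCycle) (h4 : 4 ≤ C.length)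
    (hnc : ¬HasChord (scomp G S) C) (hCS : ∀ x ∈ C.support, x ∈ S) : HasInduced2K2 G S := by
  have hlen : C.length = 4 := le_antisymm (hC.length_le_four_of_isClique h4 hnc
    hA.isClique_scomp_inter hAc.isClique_scomp_inter
    fun x hx => (em (x ∈ A)).imp (⟨·, hCS x hx⟩) (⟨·, hCS x hx⟩)) h4
  obtain ⟨a, b, c, d, ha, hb, hc, hd, hac, hbd, hab, hbc, hcd, hda, nac, nbd⟩ :=
    hC.exists_cycle4 hlen hnc
  replace ha := hCS a ha
  replace hb := hCS b hb
  replace hc := hCS c hc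
  replace hd := hCS d hd
  have gadj : ∀ {x y}, x ∈ S → y ∈ S → x ≠ y → ¬(scomp G S).Adj x y → G.Adj x y :=
    fun hx hy hne h => by_contra fun h' => h ((scomp_adj_iff_of_mem hx hy).mpr ⟨hne, h'⟩)
  have gnadj : ∀ {x y}, x ∈ S → y ∈ S → (scomp G S).Adj x y → ¬G.Adj x y :=
    fun hx hy h => ((scomp_adj_iff_of_mem hx hy).mp h).2
  exact ⟨a, c, b, d, ha, hc, hb, hd, hac, hab.ne, hda.ne.symm, hbc.ne.symm, hcd.ne, hbd,
    gadj ha hc hac nac, gadj hb hd hbd nbd, gnadj ha hb hab, fun h => gnadj hd ha hda h.symm,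
    fun h => gnadj hb hc hbc h.symm, gnadj hc hd hcd⟩

theorem chordal_scomp_of_vertexCover (hA : IsIndep G A) (hAc : IsIndep G Aᶜ)
    (hvc : ∀ u v : V, G.Adj u v → u ∈ S ∨ v ∈ S) (h2k2 : ¬HasInduced2K2 G S) :
    Chordal (scomp G S) := by
  classical
  intro a C hC h4
  by_contra hnc
  by_cases! hout : ∃ w ∈ C.support, w ∉ S
  · obtain ⟨w, hw, hwS⟩ := hout
    exact hnc (hasChord_scomp_of_notMem hA hAc hvc hC h4 hw hwS)
  · exact h2k2 (hasInduced2K2_of_not_hasChord_scomp hA hAc hC h4 hnc hout)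

end Main

theorem stmt8_general {V : Type*} (G : SimpleGraph V)
    (h2conn : ∀ v : V, (G.induce {u : V | u ≠ v}).Connected)
    (A B : Set V)
    (hpart : A ∪ B = Set.univ)
    (hA : IsIndep G A) (hB : IsIndep G B)
    (S : Set V)
    (hnotcb : ¬ ∃ X Y : Set V, X ∪ Y = S ∧ Disjoint X Y ∧
      IsIndep G X ∧ IsIndep G Y ∧ ∀ x ∈ X, ∀ y ∈ Y, G.Adj x y) :
    Chordal (scomp G S) ↔
      ((∀ u v : V, G.Adj u v → u ∈ S ∨ v ∈ S) ∧
       ¬ ∃ a b c d : V, a ∈ S ∧ b ∈ S ∧ c ∈ S ∧ d ∈ S ∧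
         a ≠ b ∧ a ≠ c ∧ a ≠ d ∧ b ≠ c ∧ b ≠ d ∧ c ≠ d ∧
         G.Adj a b ∧ G.Adj c d ∧
         ¬ G.Adj a c ∧ ¬ G.Adj a d ∧ ¬ G.Adj b c ∧ ¬ G.Adj b d) := by
  have hAc : IsIndep G Aᶜ := fun u hu v hv => by
    have hsub : Aᶜ ⊆ B := fun z hz => (hpart.symm ▸ Set.mem_univ z : z ∈ A ∪ B).resolve_left hz
    exact hB (hsub hu) (hsub hv)
  exact ⟨fun hch => ⟨hch.scomp_vertexCover h2conn hA hAc hnotcb, hch.not_hasInduced2K2⟩,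
    fun ⟨hvc, h2k2⟩ => chordal_scomp_of_vertexCover hA hAc hvc h2k2⟩

theorem stmt8 {V : Type*} [Fintype V] (G : SimpleGraph V)
    (hcard : 3 ≤ Fintype.card V)
    (h2conn : ∀ v : V, (G.induce {u : V | u ≠ v}).Connected)
    (A B : Set V)
    (hpart : A ∪ B = Set.univ) (hdisj : Disjoint A B)
    (hA : IsIndep G A) (hB : IsIndep G B)
    (S : Set V)
    (hnotcb : ¬ ∃ X Y : Set V, X ∪ Y = S ∧ Disjoint X Y ∧
      IsIndep G X ∧ IsIndep G Y ∧ ∀ x ∈ X, ∀ y ∈ Y, G.Adj x y) :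
    Chordal (scomp G S) ↔
      ((∀ u v : V, G.Adj u v → u ∈ S ∨ v ∈ S) ∧
       ¬ ∃ a b c d : V, a ∈ S ∧ b ∈ S ∧ c ∈ S ∧ d ∈ S ∧
         a ≠ b ∧ a ≠ c ∧ a ≠ d ∧ b ≠ c ∧ b ≠ d ∧ c ≠ d ∧
         G.Adj a b ∧ G.Adj c d ∧
         ¬ G.Adj a c ∧ ¬ G.Adj a d ∧ ¬ G.Adj b c ∧ ¬ G.Adj b d) :=
  stmt8_general G h2conn A B hpart hA hB S hnotcb
end

section
/- Let G be a 2-connected bipartite simple graph on a finite vertex type with bipartition (A, B), and let S ⊆ A. If G ⊕ S is chordal, then S = A. -/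
/-!
Suppose `a ∈ A \ S`. Since `S ⊆ A` is independent, `G ⊕ S` contains `G`; the neighbours of `a`
in `G ⊕ S` are its `G`-neighbours, which lie in `B`, and `B` is still independent there. So `a`
lies on no triangle of `G ⊕ S`. On the other hand 2-connectivity puts `a` on a cycle, and in a
chordal graph every vertex on a cycle lies on a triangle: a chord splits a shortest cycle through
the vertex into two shorter cycles, one of which still passes through it.
-/

open SimpleGraph

namespace SimpleGraph

variable {V : Type*} {G : SimpleGraph V}

lemma scomp_adj_iff_of_notMem_left {S : Set V} {u v : V} (hu : u ∉ S) :
    (scomp G S).Adj u v ↔ G.Adj u v :=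
  ⟨fun ⟨_, h⟩ => h.elim (fun h => absurd h.1.1 hu) And.right,
    fun h => ⟨h.ne, .inr ⟨fun h => hu h.1, h⟩⟩⟩

lemma le_scomp_of_isIndep {S : Set V} (hS : IsIndep G S) : G ≤ scomp G S :=
  fun _ _ h => ⟨h.ne, .inr ⟨fun hs => hS hs.1 hs.2 h, h⟩⟩

lemma IsIndep.scomp_of_disjoint {S T : Set V} (hT : IsIndep G T) (hTS : Disjoint T S) :
    IsIndep (scomp G S) T :=
  fun _ hu _ hv h => hT hu hv ((scomp_adj_iff_of_notMem_left (hTS.notMem_of_mem_left hu)).mp h)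

lemma exists_ne_ne_of_three_le_card [Fintype V] (hcard : 3 ≤ Fintype.card V) (x y : V) :
    ∃ z, z ≠ x ∧ z ≠ y := by
  classical
  have hlt : ({x, y} : Finset V).card < (Finset.univ : Finset V).card :=
    Finset.card_le_two.trans_lt (by rw [Finset.card_univ]; omega)
  obtain ⟨z, -, hz⟩ := Finset.exists_mem_notMem_of_card_lt_card hlt
  exact ⟨z, by simpa [not_or] using hz⟩

lemma exists_adj_ne_of_connected_induce {v w z : V}
    (hconn : (G.induce {u | u ≠ w}).Connected) (hvw : v ≠ w) (hzv : z ≠ v) (hzw : z ≠ w) :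
    ∃ x, x ≠ w ∧ G.Adj v x := by
  obtain ⟨p⟩ := hconn.preconnected ⟨v, hvw⟩ ⟨z, hzw⟩
  have hp : ¬ p.Nil := Walk.not_nil_of_ne fun h => hzv (congrArg Subtype.val h).symm
  exact ⟨p.snd, p.snd.2, Walk.adj_snd hp⟩

lemma exists_isCycle_of_adj_of_connected_induce {v b₁ b₂ : V}
    (hconn : (G.induce {u | u ≠ v}).Connected) (h₁ : G.Adj v b₁) (h₂ : G.Adj v b₂)
    (hne : b₁ ≠ b₂) : ∃ (u : V) (C : G.Walk u u), C.IsCycle ∧ v ∈ C.support := by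
  classical
  obtain ⟨p⟩ := hconn.preconnected ⟨b₂, h₂.ne'⟩ ⟨b₁, h₁.ne'⟩
  obtain ⟨q, hq, hvq⟩ : ∃ q : G.Walk b₂ b₁, q.IsPath ∧ v ∉ q.support := by
    let q := p.toPath.1.map (Embedding.induce _).toHom
    have hvq : v ∉ q.support := by
      simp only [q, Walk.support_map, List.mem_map, not_exists, not_and]
      exact fun x _ hx => x.2 hx
    exact ⟨q, p.toPath.2.map Subtype.val_injective, hvq⟩
  refine ⟨b₁, .cons h₁.symm (.cons h₂ q), ?_, by simp⟩
  refine (Walk.cons_isCycle_iff _ _).mpr ⟨hq.cons hvq, ?_⟩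
  rw [Walk.edges_cons, List.mem_cons]
  rintro (h | h)
  · exact hne (Sym2.eq_iff.mp h |>.elim (fun h => absurd h.1 h₁.ne') And.left)
  · exact hvq (q.snd_mem_support_of_mem_edges h)

lemma exists_isCycle_mem_support_of_forall_connected_induce [Fintype V]
    (hcard : 3 ≤ Fintype.card V) (h2conn : ∀ v : V, (G.induce {u | u ≠ v}).Connected) (v : V) :
    ∃ (u : V) (C : G.Walk u u), C.IsCycle ∧ v ∈ C.support := by
  obtain ⟨z, hzv, -⟩ := exists_ne_ne_of_three_le_card hcard v v
  obtain ⟨z', hz'v, hz'z⟩ := exists_ne_ne_of_three_le_card hcard v z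
  obtain ⟨b₁, -, h₁⟩ := exists_adj_ne_of_connected_induce (h2conn z) hzv.symm hz'v hz'z
  obtain ⟨w, hwv, hwb₁⟩ := exists_ne_ne_of_three_le_card hcard v b₁
  obtain ⟨b₂, hb₂, h₂⟩ := exists_adj_ne_of_connected_induce (h2conn b₁) h₁.ne hwv hwb₁
  exact exists_isCycle_of_adj_of_connected_induce (h2conn v) h₁ h₂ hb₂.symm

namespace Walk

lemma exists_adj_adj_adj_of_length_eq_three {v : V} (C : G.Walk v v) (hC : C.length = 3) :
    ∃ x y, G.Adj v x ∧ G.Adj v y ∧ G.Adj x y := by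
  rcases C with _ | ⟨h₁, _ | ⟨h₂, _ | ⟨h₃, _ | ⟨_, _⟩⟩⟩⟩ <;> simp at hC
  exact ⟨_, _, h₁, h₃.symm, h₂⟩

/-- A chord `xy` of the cycle `P ++ Q` splits it into the cycles `yx ++ P` and `xy ++ Q`. -/
lemma IsCycle.exists_shorter_of_append_of_chord {x y v : V} {P : G.Walk x y} {Q : G.Walk y x}
    (hC : (P.append Q).IsCycle) (hxy : G.Adj x y) (hchord : s(x, y) ∉ (P.append Q).edges)
    (hv : v ∈ (P.append Q).support) :
    ∃ (w : V) (C : G.Walk w w), C.IsCycle ∧ v ∈ C.support ∧ C.length < (P.append Q).length := by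
  rw [edges_append, List.mem_append, not_or] at hchord
  have hP : (cons hxy.symm P).IsCycle := (cons_isCycle_iff _ _).mpr
    ⟨hC.isPath_of_append_left (not_nil_of_ne hxy.ne'), by rw [Sym2.eq_swap]; exact hchord.1⟩
  have hQ : (cons hxy Q).IsCycle := (cons_isCycle_iff _ _).mpr
    ⟨hC.isPath_of_append_right (not_nil_of_ne hxy.ne), hchord.2⟩
  have hPlen := hP.three_le_length
  have hQlen := hQ.three_le_length
  simp only [length_cons] at hPlen hQlen
  rcases (mem_support_append_iff _ _).mp hv with hvP | hvQ
  · exact ⟨y, _, hP, List.mem_cons_of_mem _ hvP, by simp; omega⟩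
  · exact ⟨x, _, hQ, List.mem_cons_of_mem _ hvQ, by simp; omega⟩

lemma IsCycle.exists_shorter_of_chord {u v x y : V} {C : G.Walk u u} (hC : C.IsCycle)
    (hx : x ∈ C.support) (hy : y ∈ C.support) (hxy : G.Adj x y) (hchord : s(x, y) ∉ C.edges)
    (hv : v ∈ C.support) :
    ∃ (w : V) (C' : G.Walk w w), C'.IsCycle ∧ v ∈ C'.support ∧ C'.length < C.length := by
  classical
  have hy' : y ∈ (C.rotate x hx).support := (mem_support_rotate_iff ..).mpr hy
  rw [← length_rotate C x hx, ← take_spec _ hy']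
  rw [← mem_support_rotate_iff C x hx, ← take_spec _ hy'] at hv
  refine (take_spec _ hy' ▸ hC.rotate hx).exists_shorter_of_append_of_chord hxy ?_ hv
  rw [take_spec]
  exact fun h => hchord ((rotate_edges C x hx).perm.mem_iff.mp h)

end Walk

end SimpleGraph

open SimpleGraph in
lemma Chordal.exists_adj_adj_adj_of_mem_support {V : Type*} {G : SimpleGraph V}
    (hG : Chordal G) {u v : V} {C : G.Walk u u} (hC : C.IsCycle) (hv : v ∈ C.support) :
    ∃ x y, G.Adj v x ∧ G.Adj v y ∧ G.Adj x y := by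
  classical
  induction hn : C.length using Nat.strong_induction_on generalizing u C with
  | _ n ih =>
    rcases hC.three_le_length.eq_or_lt with h3 | h4
    · exact (C.rotate v hv).exists_adj_adj_adj_of_length_eq_three (by simp [← h3])
    · obtain ⟨x, y, hx, hy, hxy, hchord⟩ := hG u C hC h4
      obtain ⟨w, C', hC', hvC', hlen⟩ := hC.exists_shorter_of_chord hx hy hxy hchord hv
      exact ih _ (hn ▸ hlen) hC' hvC' rfl

theorem stmt9 {V : Type*} [Fintype V] (G : SimpleGraph V)
    (hcard : 3 ≤ Fintype.card V)
    (h2conn : ∀ v : V, (G.induce {u : V | u ≠ v}).Connected)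
    (A B : Set V)
    (hpart : A ∪ B = Set.univ) (hdisj : Disjoint A B)
    (hA : IsIndep G A) (hB : IsIndep G B)
    (S : Set V) (hSA : S ⊆ A)
    (hchordal : Chordal (scomp G S)) :
    S = A := by
  refine hSA.antisymm fun a ha => by_contra fun haS => ?_
  have hnbr_mem_B : ∀ ⦃v⦄, (scomp G S).Adj a v → v ∈ B := fun v hav =>
    (hpart.symm ▸ Set.mem_univ v : v ∈ A ∪ B).resolve_left fun hvA =>
      hA ha hvA ((scomp_adj_iff_of_notMem_left haS).mp hav)
  have hG_le : G ≤ scomp G S := le_scomp_of_isIndep fun u hu v hv => hA (hSA hu) (hSA hv)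
  obtain ⟨u, C, hC, haC⟩ := exists_isCycle_mem_support_of_forall_connected_induce hcard h2conn a
  obtain ⟨x, y, hax, hay, hxy⟩ := hchordal.exists_adj_adj_adj_of_mem_support (hC.mapLe hG_le)
    (by rwa [Walk.support_mapLe_eq_support])
  exact hB.scomp_of_disjoint (hdisj.symm.mono_right hSA) (hnbr_mem_B hax) (hnbr_mem_B hay) hxy
end

section
/- Let G be a triangle-free simple graph on a finite vertex type, and let S be a set of vertices of minimum size such that G ⊕ S is chordal (i.e., G ⊕ S is chordal and every set T with G ⊕ T chordal satisfies |S| ≤ |T|). Then every vertex u ∈ S has a neighbor in G that lies outside S. -/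
open SimpleGraph

/-!
If some `u ∈ S` had all its `G`-neighbours in `S`, then `T = S \ {u}` would also make `G ⊕ T`
chordal. Indeed `G ⊕ T` agrees with `G ⊕ S` away from `u`, so cycles avoiding `u` keep their
chords; and in `G ⊕ T` the neighbours of `u` are its `G`-neighbours, which lie in `T` and are
pairwise non-adjacent in the triangle-free `G`, hence pairwise adjacent in `G ⊕ T`. So `u` is
simplicial in `G ⊕ T`, and the two cycle-neighbours of `u` on any long cycle through it span a
chord. Since `|T| < |S|`, this contradicts the minimality of `S`.
-/

namespace SimpleGraph

variable {V : Type*} {H H' : SimpleGraph V}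

theorem Walk.IsCycle.snd_penultimate_notMem_edges_s10 {u : V} {C : H.Walk u u} (hC : C.IsCycle)
    (hlen : 4 ≤ C.length) : s(C.snd, C.penultimate) ∉ C.edges := by
  have hnil := hC.not_nil
  have hedges : C.edges = s(u, C.snd) :: C.tail.edges := by
    rw [← Walk.edges_cons (C.adj_snd hnil), C.cons_tail_eq hnil]
  rw [hedges, List.mem_cons, Sym2.eq_iff]
  rintro ((⟨hsnd, -⟩ | ⟨-, hpen⟩) | hmem)
  · exact (C.adj_snd hnil).ne hsnd.symm
  · exact (C.adj_penultimate hnil).ne hpen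
  · -- on the path `C.tail` the only edge at `C.snd` leads to `C.getVert 2`
    have h2 : C.penultimate = C.getVert 2 := by
      simpa using hC.isPath_tail.eq_snd_of_mem_edges hmem
    have := hC.getVert_injOn ⟨by omega, by omega⟩ ⟨by omega, by omega⟩ h2
    omega

theorem hasChord_of_isClique_neighborSet [DecidableEq V] {a u : V} {C : H.Walk a a}
    (hC : C.IsCycle) (hlen : 4 ≤ C.length) (hu : u ∈ C.support)
    (hclique : H.IsClique (H.neighborSet u)) : HasChord H C := by
  set C' := C.rotate u hu
  have hC' : C'.IsCycle := hC.rotate hu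
  have hnil := hC'.not_nil
  refine ⟨C'.snd, C'.penultimate, ?_, ?_, ?_, ?_⟩
  · exact (C.mem_support_rotate_iff u hu).mp (C'.getVert_mem_support _)
  · exact (C.mem_support_rotate_iff u hu).mp (C'.getVert_mem_support _)
  · exact hclique (C'.adj_snd hnil) (C'.adj_penultimate hnil).symm hC'.snd_ne_penultimate
  · rw [← (C.rotate_edges u hu).perm.mem_iff]
    exact hC'.snd_penultimate_notMem_edges_s10 (by simpa [C'] using hlen)

theorem hasChord_of_adj_iff_on_support (hH' : Chordal H') {a : V} {C : H.Walk a a}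
    (hC : C.IsCycle) (hlen : 4 ≤ C.length)
    (hagree : ∀ v ∈ C.support, ∀ w ∈ C.support, H.Adj v w ↔ H'.Adj v w) : HasChord H C := by
  have hedges : ∀ e ∈ C.edges, e ∈ H'.edgeSet := by
    rintro ⟨v, w⟩ he
    exact (hagree v (C.fst_mem_support_of_mem_edges he) w
      (C.snd_mem_support_of_mem_edges he)).mp (C.adj_of_mem_edges he)
  obtain ⟨x, y, hx, hy, hxy, hnot⟩ :=
    hH' a (C.transfer H' hedges) (hC.transfer hedges) (by simpa using hlen)
  rw [Walk.support_transfer] at hx hy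
  rw [Walk.edges_transfer] at hnot
  exact ⟨x, y, hx, hy, (hagree x hx y hy).mpr hxy, hnot⟩

theorem chordal_of_isClique_neighborSet (hH' : Chordal H') (u : V)
    (hclique : H.IsClique (H.neighborSet u))
    (hagree : ∀ v w, v ≠ u → w ≠ u → (H.Adj v w ↔ H'.Adj v w)) : Chordal H := by
  classical
  intro a C hC hlen
  by_cases hu : u ∈ C.support
  · exact hasChord_of_isClique_neighborSet hC hlen hu hclique
  · exact hasChord_of_adj_iff_on_support hH' hC hlen fun v hv w hw =>
      hagree v w (ne_of_mem_of_not_mem hv hu) (ne_of_mem_of_not_mem hw hu)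

end SimpleGraph

section scomp

variable {V : Type*} {G : SimpleGraph V}

theorem scomp_adj_of_notMem {T : Set V} {u v : V} (hu : u ∉ T) :
    (scomp G T).Adj u v ↔ G.Adj u v := by
  simp [scomp, hu, and_iff_right_of_imp G.ne_of_adj]

theorem scomp_diff_singleton_adj_iff {S : Set V} {u v w : V} (hv : v ≠ u) (hw : w ≠ u) :
    (scomp G (S \ {u})).Adj v w ↔ (scomp G S).Adj v w := by
  simp [scomp, hv, hw]

theorem isClique_scomp_neighborSet (htf : G.CliqueFree 3) {T : Set V} {u : V}
    (hT : G.neighborSet u ⊆ T) : (scomp G T).IsClique (G.neighborSet u) := by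
  classical
  intro x hx y hy hxy
  have hnadj : ¬ G.Adj x y := fun h => htf {u, x, y} (is3Clique_triple_iff.mpr ⟨hx, hy, h⟩)
  exact ⟨hxy, Or.inl ⟨⟨hT hx, hT hy⟩, hnadj⟩⟩

theorem chordal_scomp_diff_singleton (htf : G.CliqueFree 3) {S : Set V}
    (hS : Chordal (scomp G S)) {u : V} (hu : G.neighborSet u ⊆ S) :
    Chordal (scomp G (S \ {u})) := by
  have hnbhd : (scomp G (S \ {u})).neighborSet u = G.neighborSet u :=
    Set.ext fun _ => scomp_adj_of_notMem fun h => h.2 rfl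
  refine chordal_of_isClique_neighborSet hS u ?_ fun v w hv hw =>
    scomp_diff_singleton_adj_iff hv hw
  rw [hnbhd]
  exact isClique_scomp_neighborSet htf fun w hw => ⟨hu hw, (G.ne_of_adj hw).symm⟩

end scomp

theorem stmt10 {V : Type*} [Fintype V] (G : SimpleGraph V)
    (htf : G.CliqueFree 3)
    (S : Set V)
    (hchordal : Chordal (scomp G S))
    (hmin : ∀ T : Set V, Chordal (scomp G T) → S.ncard ≤ T.ncard) :
    ∀ u ∈ S, ∃ w : V, G.Adj u w ∧ w ∉ S := by
  intro u hu
  by_contra! hnbhd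
  have hle := hmin _ (chordal_scomp_diff_singleton htf hchordal hnbhd)
  exact (Set.ncard_sdiff_singleton_lt_of_mem hu S.toFinite).not_ge hle
end

section
/- Let k ≥ 2, let G be a forest on a finite vertex type, and let S be a set of vertices such that G ⊕ S has degeneracy exactly k. Then |S| ≥ k. -/
open SimpleGraph

/-- `H` has degeneracy exactly `k`. -/
def DegeneracyExactly {V : Type*} (H : SimpleGraph V) (k : ℕ) : Prop :=
  (∀ X : Set V, X.Nonempty → ∃ v ∈ X, {w | w ∈ X ∧ H.Adj v w}.ncard ≤ k) ∧
  (∃ X : Set V, X.Nonempty ∧ ∀ v ∈ X, k ≤ {w | w ∈ X ∧ H.Adj v w}.ncard)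

/-
A set `X` witnessing that `G ⊕ S` has degeneracy at least `k` induces a forest in `G`, so
it contains a vertex `v` with at most one `G`-neighbour in `X`. Outside `S` complementation
changes nothing at `v`, so `v ∈ S` as `k ≥ 2`; then every `(G ⊕ S)`-neighbour of `v` in `X`
is either a `G`-neighbour or another vertex of `S`, whence `k ≤ 1 + (|S| - 1)`.
-/

namespace SimpleGraph

variable {V : Type*} {G : SimpleGraph V}

/-- The first vertex of a longest path is a leaf: a neighbour off the path would extend it, and a
neighbour on the path must be the second vertex since `G` is acyclic. -/
theorem IsAcyclic.exists_neighborSet_subsingleton [Nonempty V] [Finite G.edgeSet]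
    (hG : G.IsAcyclic) : ∃ v, (G.neighborSet v).Subsingleton := by
  obtain ⟨u, v, p, hp, hmax⟩ := Walk.exists_isPath_forall_isPath_length_le_length G
  have h_snd : G.neighborSet u ⊆ {p.snd} := fun w hw => by
    by_cases hwp : w ∈ p.support
    · exact hG.eq_snd_of_adj_start hp hw hwp
    · have := hmax _ _ (.cons hw.symm p) (hp.cons hwp)
      simp at this
  exact ⟨u, Set.subsingleton_singleton.anti h_snd⟩

theorem IsAcyclic.exists_mem_inter_neighborSet_subsingleton [Finite V] (hG : G.IsAcyclic)
    {X : Set V} (hX : X.Nonempty) : ∃ v ∈ X, (X ∩ G.neighborSet v).Subsingleton := by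
  have := hX.to_subtype
  obtain ⟨⟨v, hv⟩, hleaf⟩ := (hG.induce X).exists_neighborSet_subsingleton
  exact ⟨v, hv, fun a ha b hb =>
    congrArg Subtype.val (hleaf (x := ⟨a, ha.1⟩) ha.2 (y := ⟨b, hb.1⟩) hb.2)⟩

variable {S : Set V} {v : V}

theorem neighborSet_scomp_of_notMem (hv : v ∉ S) :
    (scomp G S).neighborSet v = G.neighborSet v := by
  ext w
  simp only [mem_neighborSet, scomp, hv, false_and, not_false_eq_true, true_and, false_or,
    and_iff_right_iff_imp]
  exact Adj.ne

theorem neighborSet_scomp_subset : (scomp G S).neighborSet v ⊆ S \ {v} ∪ G.neighborSet v := by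
  rintro w ⟨hne, ⟨⟨-, hw⟩, -⟩ | ⟨-, hadj⟩⟩
  · exact Or.inl ⟨hw, hne.symm⟩
  · exact Or.inr hadj

end SimpleGraph

theorem stmt12 {V : Type*} [Fintype V] (G : SimpleGraph V) (k : ℕ) (hk : 2 ≤ k)
    (hforest : G.IsAcyclic)
    (S : Set V) (hdeg : DegeneracyExactly (scomp G S) k) :
    k ≤ S.ncard := by
  obtain ⟨-, X, hXne, hXdeg⟩ := hdeg
  obtain ⟨v, hvX, hleaf⟩ := hforest.exists_mem_inter_neighborSet_subsingleton hXne
  have hleaf_card : (X ∩ G.neighborSet v).ncard ≤ 1 := Set.ncard_le_one_iff_subsingleton.2 hleaf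
  have hk_le : k ≤ (X ∩ (scomp G S).neighborSet v).ncard := hXdeg v hvX
  by_cases hvS : v ∈ S
  · calc k ≤ (X ∩ (scomp G S).neighborSet v).ncard := hk_le
      _ ≤ (S \ {v} ∪ X ∩ G.neighborSet v).ncard :=
        Set.ncard_le_ncard fun _ ⟨hwX, hw⟩ =>
          (neighborSet_scomp_subset hw).imp id (⟨hwX, ·⟩)
      _ ≤ (S \ {v}).ncard + (X ∩ G.neighborSet v).ncard := Set.ncard_union_le _ _
      _ ≤ (S \ {v}).ncard + 1 := by gcongr
      _ = S.ncard := Set.ncard_sdiff_singleton_add_one hvS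
  · rw [neighborSet_scomp_of_notMem hvS] at hk_le
    omega
end

section
/- Let k ≥ 2 and let G be a forest on a finite vertex type with at least 2k + 2 vertices. If S is a sibling set of size k in G, then G ⊕ S has degeneracy exactly k. -/
open SimpleGraph

/-- A sibling set of size `k`: an independent set of `k` vertices with a common neighbor. -/
def SiblingSet {V : Type*} (G : SimpleGraph V) (S : Set V) (k : ℕ) : Prop :=
  S.ncard = k ∧ IsIndep G S ∧ ∃ w : V, ∀ v ∈ S, G.Adj w v

/-! In a forest every nonempty vertex set contains a vertex with at most one neighbour inside it:
an end of a longest path in the induced forest. Complementing inside `S` gives any vertex at most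
`|S| - 1 = k - 1` new neighbours, so `G ⊕ S` is `k`-degenerate. Conversely, `S` is independent and
has a common neighbour `u`, so `insert u S` becomes a clique on `k + 1` vertices in `G ⊕ S`. -/

namespace SimpleGraph

variable {V : Type*} {G : SimpleGraph V}

theorem IsAcyclic.exists_ncard_neighborSet_le_one [Finite V] [Nonempty V] (hG : G.IsAcyclic) :
    ∃ v, (G.neighborSet v).ncard ≤ 1 := by
  obtain ⟨u, v, p, hp, hlongest⟩ := Walk.exists_isPath_forall_isPath_length_le_length G
  refine ⟨u, (Set.ncard_le_one_iff_subset_singleton).2 ⟨p.snd, fun w hw => ?_⟩⟩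
  have hadj : G.Adj u w := hw
  refine hG.eq_snd_of_adj_start hp hadj ?_
  by_contra hw
  simpa using hlongest _ _ _ (hp.cons (h := hadj.symm) hw)

theorem IsAcyclic.exists_mem_ncard_adj_le_one [Finite V] (hG : G.IsAcyclic) {X : Set V}
    (hX : X.Nonempty) : ∃ v ∈ X, {w | w ∈ X ∧ G.Adj v w}.ncard ≤ 1 := by
  have : Nonempty X := hX.to_subtype
  obtain ⟨v, hv⟩ := (hG.induce X).exists_ncard_neighborSet_le_one
  refine ⟨v, v.2, ?_⟩
  have : {w | w ∈ X ∧ G.Adj v w} = Subtype.val '' (G.induce X).neighborSet v := by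
    ext w; simp [and_comm]
  rwa [this, Set.ncard_image_of_injective _ Subtype.val_injective]

theorem mem_sdiff_or_adj_of_scomp_adj {S : Set V} {v w : V} (h : (scomp G S).Adj v w) :
    w ∈ S \ {v} ∨ G.Adj v w := by
  obtain ⟨hne, ⟨⟨-, hw⟩, -⟩ | ⟨-, hadj⟩⟩ := h
  exacts [Or.inl ⟨hw, hne.symm⟩, Or.inr hadj]

theorem scomp_adj_of_notMem {S : Set V} {v w : V} (hv : v ∉ S) :
    (scomp G S).Adj v w ↔ G.Adj v w := by
  simpa [scomp, hv] using Adj.ne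

theorem ncard_scomp_adj_le [Finite V] (S X : Set V) (v : V) :
    {w | w ∈ X ∧ (scomp G S).Adj v w}.ncard ≤ {w | w ∈ X ∧ G.Adj v w}.ncard + (S.ncard - 1) := by
  by_cases hv : v ∈ S
  · calc {w | w ∈ X ∧ (scomp G S).Adj v w}.ncard
        ≤ ({w | w ∈ X ∧ G.Adj v w} ∪ S \ {v}).ncard :=
          Set.ncard_le_ncard fun w ⟨hwX, h⟩ => (mem_sdiff_or_adj_of_scomp_adj h).symm.imp (⟨hwX, ·⟩) id
      _ ≤ {w | w ∈ X ∧ G.Adj v w}.ncard + (S \ {v}).ncard := Set.ncard_union_le _ _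
      _ = _ := by rw [Set.ncard_sdiff_singleton_of_mem hv]
  · simp only [scomp_adj_of_notMem hv]
    omega

theorem isClique_scomp_insert {S : Set V} {u : V} (hS : IsIndep G S) (hu : ∀ v ∈ S, G.Adj u v) :
    (scomp G S).IsClique (insert u S) := by
  have huS : u ∉ S := fun h => (hu u h).ne rfl
  refine isClique_insert.2 ⟨fun v hv w hw hne => ⟨hne, .inl ⟨⟨hv, hw⟩, hS hv hw⟩⟩, fun v hv _ => ?_⟩
  exact (scomp_adj_of_notMem huS).2 (hu v hv)

theorem IsClique.ncard_adj [Finite V] {X : Set V} (hX : G.IsClique X) {v : V} (hv : v ∈ X) :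
    {w | w ∈ X ∧ G.Adj v w}.ncard = X.ncard - 1 := by
  rw [← Set.ncard_sdiff_singleton_of_mem hv]
  congr 1
  ext w
  simp only [Set.mem_ofPred_eq, Set.mem_sdiff, Set.mem_singleton_iff]
  exact ⟨fun ⟨hw, h⟩ => ⟨hw, h.ne'⟩, fun ⟨hw, hne⟩ => ⟨hw, hX hv hw (Ne.symm hne)⟩⟩

end SimpleGraph

theorem stmt13_general {V : Type*} [Fintype V] (G : SimpleGraph V) (k : ℕ) (hk : 2 ≤ k)
    (hforest : G.IsAcyclic)
    (S : Set V) (hsib : SiblingSet G S k) :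
    DegeneracyExactly (scomp G S) k := by
  obtain ⟨hS, hindep, u, hu⟩ := hsib
  have huS : u ∉ S := fun h => (hu u h).ne rfl
  refine ⟨fun X hX => ?_, insert u S, Set.insert_nonempty u S, fun v hv => ?_⟩
  · obtain ⟨v, hvX, hv⟩ := hforest.exists_mem_ncard_adj_le_one hX
    exact ⟨v, hvX, (ncard_scomp_adj_le S X v).trans (by omega)⟩
  · rw [(isClique_scomp_insert hindep hu).ncard_adj hv, Set.ncard_insert_of_notMem huS, hS]
    omega

theorem stmt13 {V : Type*} [Fintype V] (G : SimpleGraph V) (k : ℕ) (hk : 2 ≤ k)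
    (hforest : G.IsAcyclic)
    (hcard : 2 * k + 2 ≤ Fintype.card V)
    (S : Set V) (hsib : SiblingSet G S k) :
    DegeneracyExactly (scomp G S) k :=
  stmt13_general G k hk hforest S hsib
end

section
/- Let k ≥ 2 and let G be a forest on a finite vertex type with at least 2k + 2 vertices that has no sibling set of size k. If S is an independent set of G with |S| = k + 1, then G ⊕ S has degeneracy exactly k. -/
open SimpleGraph

/-!
A vertex outside `S` has the same neighbourhood in `G ⊕ S` as in `G`. In a forest the neighbours
of a vertex are pairwise non-adjacent, so any `k` of them form a sibling set; hence every vertex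
of `G` has fewer than `k` neighbours. A set `X` that meets the complement of `S` therefore
contains a vertex of degree `< k`, and inside `S` every degree is at most `|S| - 1 = k`.
Conversely `S`, being independent in `G`, is a `(k + 1)`-clique of `G ⊕ S`.
-/

section

variable {V : Type*}

lemma SimpleGraph.CliqueFree.isIndep_neighborSet {G : SimpleGraph V} (hG : G.CliqueFree 3)
    (v : V) : IsIndep G (G.neighborSet v) :=
  fun _ hu _ hw huw => isIndepSet_neighborSet_of_triangleFree G hG v hu hw huw.ne huw

lemma ncard_lt_of_subset_neighborSet {G : SimpleGraph V} {k : ℕ} (hG : G.CliqueFree 3)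
    (hnosib : ¬ ∃ T : Set V, SiblingSet G T k) {v : V} {N : Set V}
    (hN : N ⊆ G.neighborSet v) : N.ncard < k := by
  by_contra! hkN
  obtain ⟨T, hTN, hTk⟩ := Set.exists_subset_card_eq hkN
  exact hnosib ⟨T, hTk, fun _ hu _ hw => hG.isIndep_neighborSet v (hN (hTN hu)) (hN (hTN hw)),
    v, fun _ hu => hN (hTN hu)⟩

lemma scomp_adj_iff_of_notMem {G : SimpleGraph V} {S : Set V} {v w : V} (hv : v ∉ S) :
    (scomp G S).Adj v w ↔ G.Adj v w := by
  simp only [scomp, hv, false_and, not_false_eq_true, true_and, false_or]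
  exact ⟨fun h => h.2, fun h => ⟨h.ne, h⟩⟩

lemma isClique_scomp {G : SimpleGraph V} {S : Set V} (hS : IsIndep G S) :
    (scomp G S).IsClique S :=
  fun _ hv _ hw hvw => ⟨hvw, Or.inl ⟨⟨hv, hw⟩, hS hv hw⟩⟩

lemma ncard_adj_le_of_subset (H : SimpleGraph V) {S X : Set V} (hS : S.Finite) (hXS : X ⊆ S)
    {v : V} (hv : v ∈ S) : {w | w ∈ X ∧ H.Adj v w}.ncard ≤ S.ncard - 1 := by
  rw [← Set.ncard_sdiff_singleton_of_mem hv]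
  exact Set.ncard_le_ncard (fun w ⟨hwX, hvw⟩ => ⟨hXS hwX, hvw.ne'⟩) hS.sdiff

lemma SimpleGraph.IsClique.ncard_adj_eq {H : SimpleGraph V} {S : Set V} (h : H.IsClique S)
    {v : V} (hv : v ∈ S) : {w | w ∈ S ∧ H.Adj v w}.ncard = S.ncard - 1 := by
  rw [← Set.ncard_sdiff_singleton_of_mem hv]
  congr 1
  ext w
  exact ⟨fun ⟨hw, hvw⟩ => ⟨hw, hvw.ne'⟩, fun ⟨hw, hwv⟩ => ⟨hw, h hv hw (Ne.symm hwv)⟩⟩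

end

theorem stmt14_general {V : Type*} (G : SimpleGraph V) (k : ℕ)
    (hforest : G.IsAcyclic)
    (hnosib : ¬ ∃ T : Set V, SiblingSet G T k)
    (S : Set V) (hindep : IsIndep G S) (hScard : S.ncard = k + 1) :
    DegeneracyExactly (scomp G S) k := by
  have hSfin : S.Finite := Set.finite_of_ncard_ne_zero (by omega)
  have htriangle : G.CliqueFree 3 := hforest.colorable_two.cliqueFree (by norm_num)
  refine ⟨fun X ⟨v, hvX⟩ => ?_, S, Set.nonempty_of_ncard_ne_zero (by omega), fun v hv => ?_⟩
  · by_cases hXS : X ⊆ S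
    · refine ⟨v, hvX, ?_⟩
      simpa [hScard] using ncard_adj_le_of_subset (scomp G S) hSfin hXS (hXS hvX)
    · obtain ⟨u, huX, huS⟩ := Set.not_subset.mp hXS
      exact ⟨u, huX, (ncard_lt_of_subset_neighborSet htriangle hnosib
        fun _ hw => (scomp_adj_iff_of_notMem huS).mp hw.2).le⟩
  · rw [(isClique_scomp hindep).ncard_adj_eq hv, hScard, Nat.add_sub_cancel]

theorem stmt14 {V : Type*} [Fintype V] (G : SimpleGraph V) (k : ℕ) (hk : 2 ≤ k)
    (hforest : G.IsAcyclic)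
    (hcard : 2 * k + 2 ≤ Fintype.card V)
    (hnosib : ¬ ∃ T : Set V, SiblingSet G T k)
    (S : Set V) (hindep : IsIndep G S) (hScard : S.ncard = k + 1) :
    DegeneracyExactly (scomp G S) k :=
  stmt14_general G k hforest hnosib S hindep hScard
end

section
/- Let G be a connected simple graph on a finite nonempty vertex type, and let S be a set of vertices such that G ⊕ S is disconnected (not connected). Then S intersects every connected component of G ⊕ S; that is, for every vertex v there exists s ∈ S such that v and s are joined by a walk in G ⊕ S. -/
open SimpleGraph

/-! If no vertex of `S` is reachable from `v` in `G ⊕ S`, then the component of `v` avoids `S`,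
so every `G`-edge leaving it is kept in `G ⊕ S`; as `G` is connected, that component is
everything, and `G ⊕ S` is connected. -/

section

variable {V : Type*} {G : SimpleGraph V} {S : Set V}

theorem scomp_adj_of_left_notMem {u w : V} (hu : u ∉ S) (h : G.Adj u w) :
    (scomp G S).Adj u w :=
  ⟨h.ne, Or.inr ⟨fun huw => hu huw.1, h⟩⟩

theorem scomp_reachable_of_reachable_of_forall_notMem {v w : V}
    (hS : ∀ s ∈ S, ¬ (scomp G S).Reachable v s) (h : G.Reachable v w) :
    (scomp G S).Reachable v w := by
  rw [reachable_iff_reflTransGen] at h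
  induction h with
  | refl => rfl
  | tail _ hadj ih =>
    exact ih.trans (scomp_adj_of_left_notMem (fun ha => hS _ ha ih) hadj).reachable

theorem scomp_connected_of_forall_notMem (hconn : G.Connected) (v : V)
    (hS : ∀ s ∈ S, ¬ (scomp G S).Reachable v s) : (scomp G S).Connected :=
  have : Nonempty V := ⟨v⟩
  ⟨fun a b =>
    (scomp_reachable_of_reachable_of_forall_notMem hS (hconn v a)).symm.trans
      (scomp_reachable_of_reachable_of_forall_notMem hS (hconn v b))⟩

end

theorem stmt17_general {V : Type*} (G : SimpleGraph V)
    (hconn : G.Connected)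
    (S : Set V) (hdisc : ¬ (scomp G S).Connected) :
    ∀ v : V, ∃ s ∈ S, (scomp G S).Reachable v s := by
  intro v
  by_contra! hS
  exact hdisc (scomp_connected_of_forall_notMem hconn v hS)

theorem stmt17 {V : Type*} [Fintype V] [Nonempty V] (G : SimpleGraph V)
    (hconn : G.Connected)
    (S : Set V) (hdisc : ¬ (scomp G S).Connected) :
    ∀ v : V, ∃ s ∈ S, (scomp G S).Reachable v s :=
  stmt17_general G hconn S hdisc
end
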